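/- Let χ : {1,…,n} → {ℓ,c,r}, let π = {V₁,…,V_t} ∈ IBNC(χ), and let σ ∈ IBNC(χ) with σ ≤ π. Then the Möbius function of the lattice IBNC(χ) factors over the blocks of π: μ_{IBNC(χ)}(σ, π) = ∏_{s=1}^{t} μ_{IBNC(χ|_{V_s})}(σ|_{V_s}, 1_{V_s}), where 1_{V_s} denotes the partition of V_s into one block. -/
import Mathlib


namespace FFB

/-- The three letters ℓ, c, r labelling the faces. -/
inductive Letter : Type where
  | l | c | r
deriving DecidableEq

/-- `x` is one of the letters `ℓ`, `c`. -/
def isLC (x : Letter) : Prop := x = Letter.l ∨ x = Letter.c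

variable {α : Type*}

/-- The total order `≺_χ` on the index set determined by `χ`:
the elements of `χ⁻¹{ℓ,c}` in increasing order followed by the elements of
`χ⁻¹{r}` in decreasing order. -/
def chiLT [LT α] (χ : α → Letter) (i j : α) : Prop :=
  (isLC (χ i) ∧ isLC (χ j) ∧ i < j)
  ∨ (isLC (χ i) ∧ χ j = Letter.r)
  ∨ (χ i = Letter.r ∧ χ j = Letter.r ∧ j < i)

/-- A partition (equivalence relation) `π` is `χ`-noncrossing if there is no quadruple
`s₁ ≺_χ r₁ ≺_χ s₂ ≺_χ r₂` with `s₁ ∼ s₂`, `r₁ ∼ r₂` lying in different blocks. -/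
def ChiNoncrossing [LT α] (χ : α → Letter) (π : Setoid α) : Prop :=
  ∀ s₁ r₁ s₂ r₂ : α, chiLT χ s₁ r₁ → chiLT χ r₁ s₂ → chiLT χ s₂ r₂ →
    π s₁ s₂ → π r₁ r₂ → π s₁ r₁

/-- A partition `π` is `χ`-interval if whenever `i < j < k`, `i ∼ k` and `χ j = c`,
then `i, j, k` all lie in the same block. -/
def ChiInterval [LT α] (χ : α → Letter) (π : Setoid α) : Prop :=
  ∀ i j k : α, i < j → j < k → χ j = Letter.c → π i k → π i j

/-- The set of interval-bi-noncrossing partitions with respect to `χ`. -/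
def IBNC [LT α] (χ : α → Letter) : Set (Setoid α) :=
  {π | ChiNoncrossing χ π ∧ ChiInterval χ π}

/-- The set of `χ`-noncrossing partitions. -/
def NC [LT α] (χ : α → Letter) : Set (Setoid α) :=
  {π | ChiNoncrossing χ π}

/-- Restriction of a partition of `α` to a subset `V ⊆ α`. -/
def restrict (V : Set α) (σ : Setoid α) : Setoid V := Setoid.comap Subtype.val σ

/-- Restriction of `χ` to a subset `V ⊆ α`. -/
def restChi (V : Set α) (χ : α → Letter) : V → Letter := fun x => χ x.1

/- `mu` is the Möbius function of the finite poset `P` (with the induced order):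
it is the (two-sided) convolution inverse of the zeta function. -/
open Classical in
def IsMobius {β : Type*} [PartialOrder β] (P : Set β) (mu : β → β → ℂ) : Prop :=
  ∀ a ∈ P, ∀ b ∈ P, a ≤ b →
    ((∑ᶠ c ∈ {c | c ∈ P ∧ a ≤ c ∧ c ≤ b}, mu a c) = if a = b then 1 else 0) ∧
    ((∑ᶠ c ∈ {c | c ∈ P ∧ a ≤ c ∧ c ≤ b}, mu c b) = if a = b then 1 else 0)

section Moments

variable {A : Type*} [Ring A] [LinearOrder α] [Finite α]

/-- `φ_V(z₁,…,zₙ) = φ(z_{l₁} ⋯ z_{l_k})` where `V = {l₁ < ⋯ < l_k}`. -/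
noncomputable def phiV (φ : A → ℂ) (z : α → A) (V : Set α) : ℂ :=
  φ (((Set.toFinite V).toFinset.sort (· ≤ ·)).map z).prod

/-- `φ_σ(z₁,…,zₙ) = ∏_{V ∈ σ} φ_V(z₁,…,zₙ)`. -/
noncomputable def phiPart (φ : A → ℂ) (z : α → A) (σ : Setoid α) : ℂ :=
  ∏ᶠ q : Quotient σ, phiV φ z {y | Quotient.mk σ y = q}

/-- The free-free-Boolean cumulant
`κ_{χ,π}(z₁,…,zₙ) = Σ_{σ ∈ IBNC(χ), σ ≤ π} μ_{IBNC(χ)}(σ,π) φ_σ(z₁,…,zₙ)`,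
where `mu` is (a function which is) the Möbius function of `IBNC(χ)`. -/
noncomputable def cum (φ : A → ℂ) (χ : α → Letter)
    (mu : Setoid α → Setoid α → ℂ) (z : α → A) (π : Setoid α) : ℂ :=
  ∑ᶠ σ ∈ {σ | σ ∈ IBNC χ ∧ σ ≤ π}, mu σ π * phiPart φ z σ

end Moments

/-- Combinatorial free-free-Boolean independence: mixed cumulants vanish.
`F i x` is the face of the `i`-th triple labelled by the letter `x`. -/
def CombFFB {A : Type*} [Ring A] [Algebra ℂ A] (φ : A →ₗ[ℂ] ℂ) {I : Type*}
    (F : I → Letter → NonUnitalSubalgebra ℂ A) : Prop :=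
  ∀ (n : ℕ) (χ : Fin n → Letter) (ω : Fin n → I) (z : Fin n → A),
    (∀ k, z k ∈ F (ω k) (χ k)) → (¬ ∃ i, ∀ k, ω k = i) →
    ∀ mu : Setoid (Fin n) → Setoid (Fin n) → ℂ, IsMobius (IBNC χ) mu →
      cum (⇑φ) χ mu z ⊤ = 0

end FFB

namespace FFB

open Classical

instance setoidFinite {α : Type*} [Finite α] : Finite (Setoid α) :=
  Finite.of_injective (fun s : Setoid α => ⇑s) fun s t h =>
    Setoid.ext fun a b => by simp only at h; exact iff_of_eq (congrFun₂ h a b)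

section Aux

variable {α : Type*} [LinearOrder α]

lemma chiLT_restrict {χ : α → Letter} {V : Set α} (x y : V) :
    chiLT (restChi V χ) x y ↔ chiLT χ x.1 y.1 := by
  unfold chiLT restChi
  rw [Subtype.coe_lt_coe, Subtype.coe_lt_coe]

lemma restrict_mem_IBNC {χ : α → Letter} (V : Set α) {σ : Setoid α}
    (h : σ ∈ IBNC χ) : restrict V σ ∈ IBNC (restChi V χ) := by
  obtain ⟨h1, h2⟩ := h
  refine ⟨fun s1 r1 s2 r2 a b c hs hr => ?_, fun i j k hij hjk hc hik => ?_⟩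
  · exact h1 _ _ _ _ ((chiLT_restrict _ _).1 a) ((chiLT_restrict _ _).1 b)
      ((chiLT_restrict _ _).1 c) hs hr
  · exact h2 _ _ _ (Subtype.coe_lt_coe.2 hij) (Subtype.coe_lt_coe.2 hjk) hc hik

lemma restrict_mono {V : Set α} {σ τ : Setoid α} (h : σ ≤ τ) :
    restrict V σ ≤ restrict V τ :=
  Setoid.le_def.2 fun hxy => Setoid.le_def.1 h hxy

end Aux

section Glue

variable {α : Type*}

lemma restrict_rel {V : Set α} (σ : Setoid α) (x y : V) :
    restrict V σ x y ↔ σ x.1 y.1 := Iff.rfl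

lemma top_mem_IBNC [LT α] (χ : α → Letter) : (⊤ : Setoid α) ∈ IBNC χ :=
  ⟨fun _ _ _ _ _ _ _ _ _ => trivial, fun _ _ _ _ _ _ _ => trivial⟩

/-- Gluing partitions of the blocks of `π` into a partition of `α`. -/
def glue (π : Setoid α) (ρ : ∀ q : Quotient π, Setoid ({y | Quotient.mk π y = q} : Set α)) :
    Setoid α where
  r i j := ∃ (q : Quotient π) (hi : Quotient.mk π i = q) (hj : Quotient.mk π j = q),
    ρ q ⟨i, hi⟩ ⟨j, hj⟩
  iseqv := by
    refine ⟨fun i => ⟨_, rfl, rfl, (ρ _).refl _⟩, ?_, ?_⟩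
    · rintro i j ⟨q, hi, hj, h⟩
      exact ⟨q, hj, hi, (ρ q).symm h⟩
    · rintro i j k ⟨q, hi, hj, h⟩ ⟨q', hj', hk, h'⟩
      obtain rfl : q' = q := hj'.symm.trans hj
      exact ⟨_, hi, hk, (ρ _).trans h h'⟩

lemma glue_rel_iff (π : Setoid α) (ρ : ∀ q : Quotient π, Setoid ({y | Quotient.mk π y = q} : Set α))
    (i j : α) : glue π ρ i j ↔
      ∃ (q : Quotient π) (hi : Quotient.mk π i = q) (hj : Quotient.mk π j = q),
        ρ q ⟨i, hi⟩ ⟨j, hj⟩ := Iff.rfl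

lemma glue_le (π : Setoid α) (ρ : ∀ q : Quotient π, Setoid ({y | Quotient.mk π y = q} : Set α)) :
    glue π ρ ≤ π := by
  refine Setoid.le_def.2 ?_
  rintro i j ⟨q, hi, hj, h⟩
  exact Quotient.eq''.mp (hi.trans hj.symm)

lemma restrict_glue (π : Setoid α) (ρ : ∀ q : Quotient π, Setoid ({y | Quotient.mk π y = q} : Set α))
    (q : Quotient π) : restrict {y | Quotient.mk π y = q} (glue π ρ) = ρ q := by
  refine Setoid.ext fun x y => ?_
  rw [restrict_rel]
  constructor
  · rintro ⟨q', hi, hj, h⟩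
    obtain rfl : q' = q := hi.symm.trans x.2
    exact h
  · intro h
    exact ⟨q, x.2, y.2, h⟩

lemma glue_restrict (π τ : Setoid α) (hle : τ ≤ π) :
    glue π (fun q => restrict {y | Quotient.mk π y = q} τ) = τ := by
  refine Setoid.ext fun i j => ?_
  constructor
  · rintro ⟨q, hi, hj, h⟩
    exact h
  · intro h
    exact ⟨Quotient.mk π i, rfl, Quotient.eq''.mpr (π.iseqv.symm (Setoid.le_def.1 hle h)), h⟩

end Glue

end FFB

namespace FFB

section Glue2

variable {α : Type*}

lemma glue_mem_IBNC [LinearOrder α] {χ : α → Letter} {π : Setoid α} (hπ : π ∈ IBNC χ)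
    (ρ : ∀ q : Quotient π, Setoid ({y | Quotient.mk π y = q} : Set α))
    (hρ : ∀ q, ρ q ∈ IBNC (restChi {y | Quotient.mk π y = q} χ)) :
    glue π ρ ∈ IBNC χ := by
  constructor
  · intro s1 r1 s2 r2 a b c hs hr
    have hπs : π s1 s2 := Setoid.le_def.1 (glue_le π ρ) hs
    have hπr : π r1 r2 := Setoid.le_def.1 (glue_le π ρ) hr
    have hπsr : π s1 r1 := hπ.1 s1 r1 s2 r2 a b c hπs hπr
    obtain ⟨q, hi1, hj1, h1⟩ := hs
    obtain ⟨q', hi2, hj2, h2⟩ := hr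
    obtain rfl : q' = q := hi2.symm.trans
      ((Quotient.eq''.mpr (π.iseqv.symm hπsr)).trans hi1)
    exact ⟨_, hi1, hi2, (hρ _).1 ⟨s1, hi1⟩ ⟨r1, hi2⟩ ⟨s2, hj1⟩ ⟨r2, hj2⟩
      ((chiLT_restrict _ _).2 a) ((chiLT_restrict _ _).2 b) ((chiLT_restrict _ _).2 c) h1 h2⟩
  · intro i j k hij hjk hc hik
    have hπik : π i k := Setoid.le_def.1 (glue_le π ρ) hik
    have hπij : π i j := hπ.2 i j k hij hjk hc hπik
    obtain ⟨q, hi1, hk1, h1⟩ := hik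
    have hj1 : Quotient.mk π j = q := (Quotient.eq''.mpr (π.iseqv.symm hπij)).trans hi1
    exact ⟨q, hi1, hj1, (hρ q).2 ⟨i, hi1⟩ ⟨j, hj1⟩ ⟨k, hk1⟩
      (Subtype.coe_lt_coe.1 hij) (Subtype.coe_lt_coe.1 hjk) hc h1⟩

lemma restrict_self_top (π : Setoid α) (q : Quotient π) :
    restrict {y | Quotient.mk π y = q} π = ⊤ := by
  refine Setoid.ext fun x y => ?_
  rw [restrict_rel]
  exact ⟨fun _ => trivial, fun _ => Quotient.eq''.mp (x.2.trans y.2.symm)⟩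

lemma eq_pi_iff {σ π : Setoid α} (hle : σ ≤ π) :
    σ = π ↔ ∀ q : Quotient π, restrict {y | Quotient.mk π y = q} σ = ⊤ := by
  constructor
  · rintro rfl q; exact restrict_self_top σ q
  · intro h
    refine le_antisymm hle (Setoid.le_def.2 fun {i j} hπ => ?_)
    have hj : Quotient.mk π j = Quotient.mk π i := Quotient.eq''.mpr (π.iseqv.symm hπ)
    have h2 : restrict {y | Quotient.mk π y = Quotient.mk π i} σ ⟨i, rfl⟩ ⟨j, hj⟩ := by
      rw [h (Quotient.mk π i)]; trivial
    exact h2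

end Glue2

open Classical in
lemma mobius_unique {β : Type*} [PartialOrder β] (T : Finset β) (g h : β → ℂ)
    (H : ∀ a ∈ T, ∑ c ∈ T.filter (fun c => a ≤ c), g c
               = ∑ c ∈ T.filter (fun c => a ≤ c), h c) :
    ∀ (N : ℕ) (a : β), a ∈ T → (T.filter (fun c => a < c)).card ≤ N → g a = h a := by
  classical
  intro N
  induction N with
  | zero =>
    intro a ha hc
    have hfe : T.filter (fun c => a < c) = ∅ := Finset.card_eq_zero.mp (Nat.le_zero.mp hc)
    have hfa : T.filter (fun c => a ≤ c) = {a} := by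
      ext c
      simp only [Finset.mem_filter, Finset.mem_singleton]
      constructor
      · rintro ⟨hcT, hac⟩
        by_contra hne
        have hmem : c ∈ T.filter (fun c => a < c) :=
          Finset.mem_filter.mpr ⟨hcT, lt_of_le_of_ne hac (Ne.symm hne)⟩
        rw [hfe] at hmem
        exact absurd hmem (Finset.notMem_empty c)
      · rintro rfl; exact ⟨ha, le_refl _⟩
    have hH := H a ha
    rwa [hfa, Finset.sum_singleton, Finset.sum_singleton] at hH
  | succ N ih =>
    intro a ha hc
    have key : ∀ c ∈ T.filter (fun c => a < c), g c = h c := by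
      intro c hcf
      obtain ⟨hcT, hac⟩ := Finset.mem_filter.mp hcf
      refine ih c hcT ?_
      have hsub : T.filter (fun d => c < d) ⊆ T.filter (fun d => a < d) := by
        intro d hd
        obtain ⟨hdT, hcd⟩ := Finset.mem_filter.mp hd
        exact Finset.mem_filter.mpr ⟨hdT, lt_trans hac hcd⟩
      have h2 : c ∉ T.filter (fun d => c < d) := by simp
      have hcard := Finset.card_lt_card
        ((Finset.ssubset_iff_of_subset hsub).mpr ⟨c, hcf, h2⟩)
      omega
    have hnotmem : a ∉ T.filter (fun c => a < c) := by simp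
    have hsplit : T.filter (fun c => a ≤ c) = insert a (T.filter (fun c => a < c)) := by
      ext c
      simp only [Finset.mem_filter, Finset.mem_insert]
      constructor
      · rintro ⟨hcT, hac⟩
        rcases eq_or_lt_of_le hac with h' | h'
        · exact Or.inl h'.symm
        · exact Or.inr ⟨hcT, h'⟩
      · rintro (rfl | ⟨hcT, h'⟩)
        · exact ⟨ha, le_refl _⟩
        · exact ⟨hcT, le_of_lt h'⟩
    have hH := H a ha
    rw [hsplit, Finset.sum_insert hnotmem, Finset.sum_insert hnotmem,
        Finset.sum_congr rfl key] at hH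
    exact add_right_cancel hH

end FFB

namespace FFB

/-- For `σ ≤ π` in `IBNC(χ)`, the Möbius function of `IBNC(χ)` factors
over the blocks of `π`: `μ_{IBNC(χ)}(σ,π) = ∏_{V block of π} μ_{IBNC(χ|_V)}(σ|_V, 1_V)`,
where `1_V = ⊤` is the one-block partition of `V` (blocks indexed by `Quotient π`). -/
theorem mobius_factors_over_blocks (n : ℕ) (χ : Fin n → Letter)
    (π : Setoid (Fin n)) (hπ : π ∈ IBNC χ)
    (σ : Setoid (Fin n)) (hσ : σ ∈ IBNC χ) (hle : σ ≤ π)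
    (mu : Setoid (Fin n) → Setoid (Fin n) → ℂ) (hmu : IsMobius (IBNC χ) mu)
    (muB : ∀ q : Quotient π,
      Setoid ({y | Quotient.mk π y = q} : Set (Fin n)) →
      Setoid ({y | Quotient.mk π y = q} : Set (Fin n)) → ℂ)
    (hmuB : ∀ q : Quotient π,
      IsMobius (IBNC (restChi {y | Quotient.mk π y = q} χ)) (muB q)) :
    mu σ π = ∏ᶠ q : Quotient π, muB q (restrict {y | Quotient.mk π y = q} σ) ⊤ := by
  classical
  letI : Fintype (Setoid (Fin n)) := Fintype.ofFinite _
  letI : Fintype (Quotient π) := Fintype.ofFinite _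
  letI : ∀ q : Quotient π,
      Fintype (Setoid ({y | Quotient.mk π y = q} : Set (Fin n))) :=
    fun _ => Fintype.ofFinite _
  set T : Finset (Setoid (Fin n)) :=
    Finset.univ.filter (fun τ => τ ∈ IBNC χ ∧ τ ≤ π) with hT
  have hmemT : ∀ τ : Setoid (Fin n), τ ∈ T ↔ τ ∈ IBNC χ ∧ τ ≤ π := by
    intro τ; simp [hT]
  -- blockwise Möbius sums
  have hblock : ∀ a : Setoid (Fin n), a ∈ IBNC χ → ∀ q : Quotient π,
      (∑ ρ ∈ Finset.univ.filter
          (fun ρ => ρ ∈ IBNC (restChi {y | Quotient.mk π y = q} χ)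
            ∧ restrict {y | Quotient.mk π y = q} a ≤ ρ),
        muB q ρ ⊤)
      = if restrict {y | Quotient.mk π y = q} a = ⊤ then 1 else 0 := by
    intro a ha q
    have hmo := (hmuB q (restrict {y | Quotient.mk π y = q} a)
      (restrict_mem_IBNC _ ha) ⊤ (top_mem_IBNC _) le_top).2
    have hset : {c | c ∈ IBNC (restChi {y | Quotient.mk π y = q} χ)
        ∧ restrict {y | Quotient.mk π y = q} a ≤ c ∧ c ≤ ⊤}
        = ↑(Finset.univ.filter
          (fun ρ => ρ ∈ IBNC (restChi {y | Quotient.mk π y = q} χ)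
            ∧ restrict {y | Quotient.mk π y = q} a ≤ ρ)) := by
      ext c; simp [le_top, and_assoc]
    rw [hset, finsum_mem_coe_finset] at hmo
    exact hmo
  -- the candidate function satisfies the same sum identity as `mu · π`
  have hGsum : ∀ a ∈ T,
      (∑ c ∈ T.filter (fun c => a ≤ c),
        ∏ q : Quotient π, muB q (restrict {y | Quotient.mk π y = q} c) ⊤)
      = if a = π then 1 else 0 := by
    intro a haT
    obtain ⟨ha, hale⟩ := (hmemT a).1 haT
    set R : ∀ q : Quotient π,
        Finset (Setoid ({y | Quotient.mk π y = q} : Set (Fin n))) :=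
      fun q => Finset.univ.filter
          (fun ρ => ρ ∈ IBNC (restChi {y | Quotient.mk π y = q} χ)
            ∧ restrict {y | Quotient.mk π y = q} a ≤ ρ) with hR
    have hmemR : ∀ (q : Quotient π) ρ, ρ ∈ R q ↔
        ρ ∈ IBNC (restChi {y | Quotient.mk π y = q} χ)
          ∧ restrict {y | Quotient.mk π y = q} a ≤ ρ := by
      intro q ρ; simp [hR]
    calc (∑ c ∈ T.filter (fun c => a ≤ c),
            ∏ q : Quotient π, muB q (restrict {y | Quotient.mk π y = q} c) ⊤)
        = ∑ p ∈ Fintype.piFinset R, ∏ q : Quotient π, muB q (p q) ⊤ := by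
          refine Finset.sum_bij'
            (fun τ _ => fun q => restrict {y | Quotient.mk π y = q} τ)
            (fun p _ => glue π p) ?_ ?_ ?_ ?_ ?_
          · intro τ hτ
            obtain ⟨hτT, haτ⟩ := Finset.mem_filter.mp hτ
            obtain ⟨hτI, hτπ⟩ := (hmemT τ).1 hτT
            refine Fintype.mem_piFinset.mpr fun q => (hmemR q _).2 ?_
            exact ⟨restrict_mem_IBNC _ hτI, restrict_mono haτ⟩
          · intro p hp
            have hp' : ∀ q, p q ∈ IBNC (restChi {y | Quotient.mk π y = q} χ)
                ∧ restrict {y | Quotient.mk π y = q} a ≤ p q :=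
              fun q => (hmemR q _).1 (Fintype.mem_piFinset.mp hp q)
            refine Finset.mem_filter.mpr ⟨(hmemT _).2
              ⟨glue_mem_IBNC hπ p (fun q => (hp' q).1), glue_le π p⟩, ?_⟩
            refine Setoid.le_def.2 fun {i j} hij => ?_
            have hπij : π i j := Setoid.le_def.1 hale hij
            have hj : Quotient.mk π j = Quotient.mk π i :=
              Quotient.eq''.mpr (π.iseqv.symm hπij)
            exact ⟨Quotient.mk π i, rfl, hj,
              Setoid.le_def.1 (hp' (Quotient.mk π i)).2 hij⟩
          · intro τ hτ
            obtain ⟨hτT, _⟩ := Finset.mem_filter.mp hτ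
            exact glue_restrict π τ ((hmemT τ).1 hτT).2
          · intro p _
            exact funext fun q => restrict_glue π p q
          · intro τ _
            rfl
      _ = ∏ q : Quotient π, ∑ ρ ∈ R q, muB q ρ ⊤ :=
          (Finset.prod_univ_sum R (fun q ρ => muB q ρ ⊤)).symm
      _ = ∏ q : Quotient π,
            (if restrict {y | Quotient.mk π y = q} a = ⊤ then 1 else 0) :=
          Finset.prod_congr rfl fun q _ => by rw [hR]; exact hblock a ha q
      _ = if a = π then 1 else 0 := by
          by_cases hap : a = π
          · simp [hap, restrict_self_top]
          · rw [if_neg hap]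
            have hex : ∃ q : Quotient π,
                ¬ restrict {y | Quotient.mk π y = q} a = ⊤ := by
              by_contra hx
              push_neg at hx
              exact hap ((eq_pi_iff hale).2 hx)
            obtain ⟨q, hq⟩ := hex
            exact Finset.prod_eq_zero (Finset.mem_univ q) (by rw [if_neg hq])
  have hMsum : ∀ a ∈ T,
      (∑ c ∈ T.filter (fun c => a ≤ c), mu c π) = if a = π then 1 else 0 := by
    intro a haT
    obtain ⟨ha, hale⟩ := (hmemT a).1 haT
    have hmo := (hmu a ha π hπ hale).2
    have hset : {c | c ∈ IBNC χ ∧ a ≤ c ∧ c ≤ π}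
        = ↑(T.filter (fun c => a ≤ c)) := by
      ext c; simp [hT]; tauto
    rw [hset, finsum_mem_coe_finset] at hmo
    exact hmo
  have hσT : σ ∈ T := (hmemT σ).2 ⟨hσ, hle⟩
  have hkey := mobius_unique T
    (fun c => ∏ q : Quotient π, muB q (restrict {y | Quotient.mk π y = q} c) ⊤)
    (fun c => mu c π)
    (fun a haT => (hGsum a haT).trans (hMsum a haT).symm)
    (T.filter (fun c => σ < c)).card σ hσT le_rfl
  rw [finprod_eq_prod_of_fintype]
  exact hkey.symm

end FFB
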